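/- arXiv:1804.02260 — 2 statements merged into one kernel-verified Lean document; each statement's English description precedes it below -/
import Mathlib

section
/- (Schoenberg's criterion, the converse direction underlying classical MDS.) Let D be a symmetric n × n real matrix with zero diagonal and nonnegative entries, let J = Iₙ − (1/n)𝟙𝟙ᵀ, and suppose G = −½ J D J is positive semidefinite. Then there exist points x₁, …, xₙ ∈ ℝⁿ such that ‖xᵢ − xⱼ‖² = D_{ij} for all i, j; that is, D is realizable as a squared Euclidean distance matrix. -/
/-!
The centering matrix `J` fixes every vector with coordinate sum zero, in particular `eᵢ - eⱼ`,
so the quadratic form of `G = -½ J D J` at `eᵢ - eⱼ` is `-½` times that of `D`, which is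
`-2 Dᵢⱼ` when `D` is symmetric with zero diagonal: `Gᵢᵢ - 2 Gᵢⱼ + Gⱼⱼ = Dᵢⱼ`. A positive
semidefinite `G = Bᴴ B` is the Gram matrix of the columns `xᵢ` of `B`, and for these the left
side is `‖xᵢ - xⱼ‖²`.
-/

open Matrix
open scoped ComplexOrder

namespace Matrix

section DoubleCentering

variable {ι R : Type*} [Fintype ι] [DecidableEq ι] [CommRing R]

theorem one_sub_smul_ones_mulVec_of_sum_eq_zero (c : R) {v : ι → R} (hv : ∑ k, v k = 0) :
    (1 - c • of fun _ _ => (1 : R)) *ᵥ v = v := by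
  have hones : (of fun _ _ => 1 : Matrix ι ι R) *ᵥ v = 0 := by ext; simp [mulVec, dotProduct, hv]
  rw [sub_mulVec, one_mulVec, smul_mulVec, hones, smul_zero, sub_zero]

theorem vecMul_one_sub_smul_ones_of_sum_eq_zero (c : R) {v : ι → R} (hv : ∑ k, v k = 0) :
    v ᵥ* (1 - c • of fun _ _ => (1 : R)) = v := by
  have hones : v ᵥ* (of fun _ _ => 1 : Matrix ι ι R) = 0 := by ext; simp [vecMul, dotProduct, hv]
  rw [vecMul_sub, vecMul_one, vecMul_smul, hones, smul_zero, sub_zero]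

theorem single_sub_single_dotProduct_mulVec (A : Matrix ι ι R) (i j : ι) :
    (Pi.single i 1 - Pi.single j 1) ⬝ᵥ (A *ᵥ (Pi.single i 1 - Pi.single j 1)) =
      A i i - A i j - A j i + A j j := by
  simp only [mulVec_sub, mulVec_single, MulOpposite.op_one, one_smul, dotProduct_sub,
    sub_dotProduct, single_dotProduct, col_apply, one_mul]
  ring

theorem double_centering_apply_sub {c : R} {J : Matrix ι ι R} (hJ : J = 1 - c • of fun _ _ => 1)
    (D : Matrix ι ι R) (i j : ι) :
    (J * D * J) i i - (J * D * J) i j - (J * D * J) j i + (J * D * J) j j =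
      D i i - D i j - D j i + D j j := by
  set u : ι → R := Pi.single i 1 - Pi.single j 1
  have hu : ∑ k, u k = 0 := by simp [u, Finset.sum_sub_distrib]
  rw [← single_sub_single_dotProduct_mulVec, ← single_sub_single_dotProduct_mulVec,
    ← mulVec_mulVec, hJ, one_sub_smul_ones_mulVec_of_sum_eq_zero c hu, ← mulVec_mulVec,
    dotProduct_mulVec, vecMul_one_sub_smul_ones_of_sum_eq_zero c hu]

end DoubleCentering

theorem PosSemidef.exists_eq_gram {ι 𝕜 : Type*} [Fintype ι] [RCLike 𝕜] {G : Matrix ι ι 𝕜}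
    (hG : G.PosSemidef) : ∃ x : ι → EuclideanSpace 𝕜 ι, G = gram 𝕜 x := by
  classical
  open scoped MatrixOrder in
  obtain ⟨B, rfl⟩ := CStarAlgebra.nonneg_iff_eq_star_mul_self.mp hG.nonneg
  refine ⟨fun i => WithLp.toLp 2 (fun k => B k i), ?_⟩
  ext i j
  simp [gram_apply, EuclideanSpace.inner_eq_star_dotProduct, mul_apply, dotProduct, mul_comm]

end Matrix

theorem norm_sub_sq_eq_gram {ι E : Type*} [NormedAddCommGroup E] [InnerProductSpace ℝ E] (x : ι → E)
    (i j : ι) :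
    ‖x i - x j‖ ^ 2 = gram ℝ x i i - 2 * gram ℝ x i j + gram ℝ x j j := by
  simp only [gram_apply, norm_sub_sq_real, real_inner_self_eq_norm_sq]

theorem schoenberg_realizable_general
    (n : ℕ) (D J G : Matrix (Fin n) (Fin n) ℝ)
    (hDsymm : D.IsSymm)
    (hDdiag : ∀ i, D i i = 0)
    (hJ : J = 1 - (1 / (n : ℝ)) • Matrix.of (fun _ _ => (1 : ℝ)))
    (hG : G = (-(1 / 2) : ℝ) • (J * D * J))
    (hGsymm : G.IsSymm)
    (hGpsd : ∀ v : Fin n → ℝ, 0 ≤ v ⬝ᵥ (G *ᵥ v)) :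
    ∃ x : Fin n → EuclideanSpace ℝ (Fin n), ∀ i j, ‖x i - x j‖ ^ 2 = D i j := by
  have hGherm : G.IsHermitian := by rwa [IsHermitian, conjTranspose_eq_transpose_of_trivial]
  have hGpsd' : G.PosSemidef := .of_dotProduct_mulVec_nonneg hGherm (by simpa using hGpsd)
  obtain ⟨x, hx⟩ := hGpsd'.exists_eq_gram
  refine ⟨x, fun i j => ?_⟩
  have hGentry (a b : Fin n) : G a b = -(1 / 2) * (J * D * J) a b := by rw [hG]; rfl
  have hJDJ := double_centering_apply_sub hJ D i j
  rw [norm_sub_sq_eq_gram, ← hx]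
  linarith [hGentry i i, hGentry i j, hGentry j i, hGentry j j, hGsymm.apply i j,
    hDsymm.apply i j, hDdiag i, hDdiag j]

/-- Schoenberg's criterion: if D is symmetric with zero diagonal and
nonnegative entries and G = -½ J D J is positive semidefinite, then D is
realizable as a squared Euclidean distance matrix. -/
theorem schoenberg_realizable
    (n : ℕ) (hn : 1 ≤ n) (D J G : Matrix (Fin n) (Fin n) ℝ)
    (hDsymm : D.IsSymm)
    (hDdiag : ∀ i, D i i = 0)
    (hDnonneg : ∀ i j, 0 ≤ D i j)
    (hJ : J = 1 - (1 / (n : ℝ)) • Matrix.of (fun _ _ => (1 : ℝ)))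
    (hG : G = (-(1 / 2) : ℝ) • (J * D * J))
    (hGsymm : G.IsSymm)
    (hGpsd : ∀ v : Fin n → ℝ, 0 ≤ v ⬝ᵥ (G *ᵥ v)) :
    ∃ x : Fin n → EuclideanSpace ℝ (Fin n), ∀ i j, ‖x i - x j‖ ^ 2 = D i j :=
  schoenberg_realizable_general n D J G hDsymm hDdiag hJ hG hGsymm hGpsd
end

section
/- (Optimality of the classical MDS eigen-solution; Eckart–Young for positive-semidefinite Gram approximation.) Let G be a symmetric positive-semidefinite n × n real matrix with eigenvalues λ₁ ≥ λ₂ ≥ … ≥ λₙ ≥ 0 and orthonormal eigenvectors u₁, …, uₙ, and let 1 ≤ m ≤ n. Let X* be the n × m matrix whose k-th column is √λₖ uₖ. Then for every n × m real matrix X, ‖G − X Xᵀ‖_F ≥ ‖G − X* (X*)ᵀ‖_F, and ‖G − X* (X*)ᵀ‖_F² = ∑_{k=m+1}^{n} λₖ². That is, the classical MDS configuration x*ᵢ = (√λ₁ u₁(i), …, √λₘ uₘ(i)) minimizes the strain ‖G − X Xᵀ‖_F over all m-dimensional configurations. -/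
/-!
Expand the strain in the orthonormal eigenbasis: `‖G - X Xᵀ‖_F² = ∑ₖ ‖λₖ uₖ - X Xᵀ uₖ‖²`, where
every `X Xᵀ uₖ` lies in the column space `K` of `X`, of dimension at most `m`. With `P` the
orthogonal projection onto `K` and `cₖ = ‖P uₖ‖² ∈ [0, 1]`, the `k`-th term is at least
`λₖ² (1 - cₖ)`, and `∑ₖ cₖ = tr P = dim K ≤ m`. Under these constraints `∑ₖ λₖ² (1 - cₖ)` is
smallest when `c` puts weight `1` on the `m` largest eigenvalues, which leaves the tail
`∑_{k ≥ m} λₖ²`. The MDS configuration attains it, since `X* X*ᵀ uₖ` is `λₖ uₖ` for `k < m` and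
`0` otherwise.
-/

open Matrix

/-- The Frobenius norm of a real matrix. -/
noncomputable def frobNorm {n m : ℕ} (A : Matrix (Fin n) (Fin m) ℝ) : ℝ :=
  Real.sqrt (∑ i, ∑ j, (A i j) ^ 2)

open Finset

section Projection

variable {𝕜 E : Type*} [RCLike 𝕜] [NormedAddCommGroup E] [InnerProductSpace 𝕜 E]

theorem Submodule.sq_norm_sub_sq_norm_starProjection_le (K : Submodule 𝕜 E)
    [K.HasOrthogonalProjection] (a : E) {w : E} (hw : w ∈ K) :
    ‖a‖ ^ 2 - ‖K.starProjection a‖ ^ 2 ≤ ‖a - w‖ ^ 2 := by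
  have hmin : ‖a - K.starProjection a‖ ≤ ‖a - w‖ := by
    rw [K.starProjection_minimal]
    exact ciInf_le ⟨0, Set.forall_mem_range.mpr fun _ => norm_nonneg _⟩ (⟨w, hw⟩ : K)
  have hpyth := K.norm_sq_eq_add_norm_sq_starProjection a
  rw [K.starProjection_orthogonal_val] at hpyth
  nlinarith [norm_nonneg (a - K.starProjection a)]

theorem OrthonormalBasis.sum_sq_norm_starProjection {ι : Type*} [Fintype ι]
    [FiniteDimensional 𝕜 E] (b : OrthonormalBasis ι 𝕜 E) (K : Submodule 𝕜 E) :
    ∑ i, ‖K.starProjection (b i)‖ ^ 2 = Module.finrank 𝕜 K := by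
  have hproj : LinearMap.IsProj K (K.starProjection : E →ₗ[𝕜] E) :=
    ⟨K.starProjection_apply_mem, fun _ hx => K.starProjection_eq_self_iff.mpr hx⟩
  have htrace := (LinearMap.trace_eq_sum_inner _ b).symm.trans hproj.trace
  apply_fun RCLike.re at htrace
  rw [map_sum, RCLike.natCast_re] at htrace
  rw [← htrace]
  refine Finset.sum_congr rfl fun i _ => ?_
  rw [ContinuousLinearMap.coe_coe, ← inner_conj_symm, RCLike.conj_re,
    K.re_inner_starProjection_eq_normSq, K.starProjection_apply, Submodule.coe_norm]

end Projection

theorem Finset.sum_compl_le_sum_mul_one_sub {ι : Type*} [Fintype ι] [DecidableEq ι]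
    (s : Finset ι) {μ c : ι → ℝ} {t : ℝ} (ht : 0 ≤ t) (hμs : ∀ k ∈ s, t ≤ μ k)
    (hμsc : ∀ k ∉ s, μ k ≤ t) (hc0 : ∀ k, 0 ≤ c k) (hc1 : ∀ k, c k ≤ 1)
    (hcs : ∑ k, c k ≤ s.card) :
    ∑ k ∈ sᶜ, μ k ≤ ∑ k, μ k * (1 - c k) := by
  have hs : ∑ k ∈ s, t * (1 - c k) ≤ ∑ k ∈ s, μ k * (1 - c k) :=
    sum_le_sum fun k hk => mul_le_mul_of_nonneg_right (hμs k hk) (sub_nonneg.2 (hc1 k))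
  have hsc : ∑ k ∈ sᶜ, μ k * c k ≤ ∑ k ∈ sᶜ, t * c k :=
    sum_le_sum fun k hk => mul_le_mul_of_nonneg_right (hμsc k (mem_compl.1 hk)) (hc0 k)
  have hslack : ∑ k ∈ s, t * (1 - c k) - ∑ k ∈ sᶜ, t * c k = t * (s.card - ∑ k, c k) := by
    rw [← mul_sum, ← mul_sum, ← s.sum_add_sum_compl c, sum_sub_distrib, sum_const,
      nsmul_eq_mul, mul_one]
    ring
  have hsplit : ∑ k, μ k * (1 - c k)
      = ∑ k ∈ s, μ k * (1 - c k) + ∑ k ∈ sᶜ, μ k - ∑ k ∈ sᶜ, μ k * c k := by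
    rw [← s.sum_add_sum_compl, add_sub_assoc, ← sum_sub_distrib]
    simp only [mul_one_sub]
  linarith [mul_nonneg ht (sub_nonneg.2 hcs)]

theorem OrthonormalBasis.sum_sq_tail_le_sum_norm_smul_sub_sq {E : Type*} [NormedAddCommGroup E]
    [InnerProductSpace ℝ E] [FiniteDimensional ℝ E] {n m : ℕ} (hm : 1 ≤ m) (hmn : m ≤ n)
    (b : OrthonormalBasis (Fin n) ℝ E) {lam : Fin n → ℝ} (hanti : Antitone lam)
    (hnonneg : ∀ k, 0 ≤ lam k) (K : Submodule ℝ E) (hK : Module.finrank ℝ K ≤ m)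
    (w : Fin n → E) (hw : ∀ k, w k ∈ K) :
    ∑ k ∈ univ.filter (fun k : Fin n => m ≤ (k : ℕ)), lam k ^ 2
      ≤ ∑ k, ‖lam k • b k - w k‖ ^ 2 := by
  set c : Fin n → ℝ := fun k => ‖K.starProjection (b k)‖ ^ 2
  have hc1 : ∀ k, c k ≤ 1 := fun k => by
    simpa [c, b.norm_eq_one k] using
      pow_le_pow_left₀ (norm_nonneg _) (K.norm_starProjection_apply_le (b k)) 2
  have hcs : ∑ k, c k ≤ m :=
    (b.sum_sq_norm_starProjection K).trans_le (by exact_mod_cast hK)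
  have hterm : ∀ k, lam k ^ 2 * (1 - c k) ≤ ‖lam k • b k - w k‖ ^ 2 := fun k => by
    have h := K.sq_norm_sub_sq_norm_starProjection_le (lam k • b k) (hw k)
    simp only [map_smul, norm_smul, mul_pow, b.norm_eq_one, mul_one] at h
    simpa [c, mul_one_sub] using h
  have hsq : Antitone fun k => lam k ^ 2 := fun k l hkl =>
    pow_le_pow_left₀ (hnonneg l) (hanti hkl) 2
  set s : Finset (Fin n) := univ.filter (fun k : Fin n => (k : ℕ) < m)
  have hsc : sᶜ = univ.filter (fun k : Fin n => m ≤ (k : ℕ)) := by ext; simp [s]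
  have hcard : s.card = m := by simp [s, Fin.card_filter_val_lt, hmn]
  set last : Fin n := ⟨m - 1, by omega⟩
  calc ∑ k ∈ univ.filter (fun k : Fin n => m ≤ (k : ℕ)), lam k ^ 2
      = ∑ k ∈ sᶜ, lam k ^ 2 := by rw [hsc]
    _ ≤ ∑ k, lam k ^ 2 * (1 - c k) := by
        refine s.sum_compl_le_sum_mul_one_sub (t := lam last ^ 2) (sq_nonneg _)
          (fun k hk => hsq ?_) (fun k hk => hsq ?_) (fun k => sq_nonneg _) hc1 (hcard ▸ hcs)
          <;> simp only [s, mem_filter, mem_univ, true_and] at hk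
          <;> exact Fin.le_def.2 (by simp only [last]; omega)
    _ ≤ ∑ k, ‖lam k • b k - w k‖ ^ 2 := sum_le_sum fun k _ => hterm k

theorem frobNorm_nonneg {n m : ℕ} (A : Matrix (Fin n) (Fin m) ℝ) : 0 ≤ frobNorm A :=
  Real.sqrt_nonneg _

theorem frobNorm_sq_eq_sum_norm_toEuclideanLin_sq {n m : ℕ} {ι : Type*} [Fintype ι]
    (A : Matrix (Fin n) (Fin m) ℝ) (b : OrthonormalBasis ι ℝ (EuclideanSpace ℝ (Fin m))) :
    frobNorm A ^ 2 = ∑ k, ‖A.toEuclideanLin (b k)‖ ^ 2 := by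
  have hrow : ∀ i k, A.toEuclideanLin (b k) i = inner ℝ (b k) (WithLp.toLp 2 (A i)) := by
    intro i k
    simp [toLpLin_apply, mulVec, dotProduct, PiLp.inner_apply]
  calc frobNorm A ^ 2 = ∑ i, ‖WithLp.toLp 2 (A i)‖ ^ 2 := by
        rw [frobNorm, Real.sq_sqrt (by positivity)]
        simp [EuclideanSpace.norm_sq_eq]
    _ = ∑ i, ∑ k, inner ℝ (b k) (WithLp.toLp 2 (A i)) ^ 2 := by
        simp_rw [← b.sum_sq_inner_right]
    _ = ∑ k, ‖A.toEuclideanLin (b k)‖ ^ 2 := by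
        rw [sum_comm]
        simp [EuclideanSpace.norm_sq_eq, hrow]

noncomputable def EuclideanSpace.orthonormalBasisOfDotProduct {ι : Type*} [Fintype ι]
    [DecidableEq ι] (u : ι → ι → ℝ) (horth : ∀ k l, u k ⬝ᵥ u l = if k = l then 1 else 0) :
    OrthonormalBasis ι ℝ (EuclideanSpace ℝ ι) :=
  have hon : Orthonormal ℝ fun k => WithLp.toLp 2 (u k) := by
    rw [orthonormal_iff_ite]
    intro k l
    simpa [EuclideanSpace.inner_toLp_toLp, dotProduct_comm] using horth k l
  OrthonormalBasis.mk hon (hon.linearIndependent.span_eq_top_of_card_eq_finrank' (by simp)).ge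

@[simp]
theorem EuclideanSpace.coe_orthonormalBasisOfDotProduct {ι : Type*} [Fintype ι]
    [DecidableEq ι] (u : ι → ι → ℝ) (horth : ∀ k l, u k ⬝ᵥ u l = if k = l then 1 else 0)
    (k : ι) : orthonormalBasisOfDotProduct u horth k = WithLp.toLp 2 (u k) := by
  simp [orthonormalBasisOfDotProduct]

theorem mulVec_transpose_mulVec_eigenvector {n m : ℕ} (hmn : m ≤ n) {lam : Fin n → ℝ}
    {u : Fin n → Fin n → ℝ} (hnonneg : ∀ k, 0 ≤ lam k)
    (horth : ∀ k l, u k ⬝ᵥ u l = if k = l then 1 else 0) {Y : Matrix (Fin n) (Fin m) ℝ}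
    (hY : ∀ i p, Y i p = √(lam (Fin.castLE hmn p)) * u (Fin.castLE hmn p) i) (l : Fin n) :
    Y *ᵥ (Yᵀ *ᵥ u l) = if (l : ℕ) < m then lam l • u l else 0 := by
  have hcoord : Yᵀ *ᵥ u l = fun p => if Fin.castLE hmn p = l then √(lam l) else 0 := by
    ext p
    have hdot := horth (Fin.castLE hmn p) l
    simp only [dotProduct] at hdot
    simp only [mulVec, dotProduct, transpose_apply, hY, mul_assoc, ← mul_sum, hdot]
    split_ifs with h <;> simp [h]
  rw [hcoord]
  ext i
  simp only [mulVec, dotProduct, hY, mul_ite, mul_zero]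
  split_ifs with hl
  · rw [sum_eq_single ⟨l, hl⟩]
    · simp only [Fin.castLE, Fin.eta, if_true, Pi.smul_apply, smul_eq_mul]
      linear_combination u l i * Real.mul_self_sqrt (hnonneg l)
    · intro p _ hp
      rw [if_neg]
      exact fun h => hp (Fin.ext (by simp [← h]))
    · simp
  · refine sum_eq_zero fun p _ => if_neg fun h => hl ?_
    rw [← h]
    exact p.isLt

theorem classical_mds_optimal_general
    (n m : ℕ) (hm : 1 ≤ m) (hmn : m ≤ n)
    (G : Matrix (Fin n) (Fin n) ℝ)
    (lam : Fin n → ℝ) (u : Fin n → (Fin n → ℝ))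
    (hdecr : ∀ k l : Fin n, k ≤ l → lam l ≤ lam k)
    (hnonneg : ∀ k, 0 ≤ lam k)
    (heig : ∀ k, G *ᵥ u k = lam k • u k)
    (horth : ∀ k l, u k ⬝ᵥ u l = if k = l then 1 else 0)
    (Xstar : Matrix (Fin n) (Fin m) ℝ)
    (hXstar : ∀ i : Fin n, ∀ k : Fin m,
      Xstar i k = Real.sqrt (lam (Fin.castLE hmn k)) * u (Fin.castLE hmn k) i) :
    (∀ X : Matrix (Fin n) (Fin m) ℝ,
        frobNorm (G - Xstar * Xstarᵀ) ≤ frobNorm (G - X * Xᵀ)) ∧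
      frobNorm (G - Xstar * Xstarᵀ) ^ 2 =
        ∑ k ∈ Finset.univ.filter (fun k : Fin n => m ≤ (k : ℕ)), (lam k) ^ 2 := by
  set b := EuclideanSpace.orthonormalBasisOfDotProduct u horth
  have hresidual : ∀ (Y : Matrix (Fin n) (Fin m) ℝ) k,
      (G - Y * Yᵀ).toEuclideanLin (b k) = lam k • b k - WithLp.toLp 2 (Y *ᵥ (Yᵀ *ᵥ u k)) := by
    intro Y k
    simp [b, toLpLin_toLp, heig]
  have hvalue : frobNorm (G - Xstar * Xstarᵀ) ^ 2
      = ∑ k ∈ univ.filter (fun k : Fin n => m ≤ (k : ℕ)), lam k ^ 2 := by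
    rw [frobNorm_sq_eq_sum_norm_toEuclideanLin_sq _ b, sum_filter]
    refine sum_congr rfl fun k _ => ?_
    rw [hresidual, mulVec_transpose_mulVec_eigenvector hmn hnonneg horth hXstar]
    by_cases hk : (k : ℕ) < m
    · simp [hk, not_le.2 hk, b]
    · simp [hk, not_lt.1 hk, norm_smul, b.norm_eq_one]
  refine ⟨fun X => ?_, hvalue⟩
  refine (sq_le_sq₀ (frobNorm_nonneg _) (frobNorm_nonneg _)).1 ?_
  rw [hvalue, frobNorm_sq_eq_sum_norm_toEuclideanLin_sq _ b]
  simp only [hresidual]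
  exact b.sum_sq_tail_le_sum_norm_smul_sub_sq hm hmn (fun k l hkl => hdecr k l hkl) hnonneg
    (LinearMap.range X.toEuclideanLin) (X.toEuclideanLin.finrank_range_le.trans (by simp))
    _ fun k => ⟨WithLp.toLp 2 (Xᵀ *ᵥ u k), rfl⟩

/-- Eckart–Young optimality of the classical MDS eigen-solution: the
configuration X* with k-th column √λₖ uₖ minimizes the strain ‖G - X Xᵀ‖_F
over all n × m configurations X, and the optimal squared error is the sum of
the squares of the discarded eigenvalues. -/
theorem classical_mds_optimal
    (n m : ℕ) (hm : 1 ≤ m) (hmn : m ≤ n)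
    (G : Matrix (Fin n) (Fin n) ℝ)
    (hGsymm : G.IsSymm)
    (hGpsd : ∀ v : Fin n → ℝ, 0 ≤ v ⬝ᵥ (G *ᵥ v))
    (lam : Fin n → ℝ) (u : Fin n → (Fin n → ℝ))
    (hdecr : ∀ k l : Fin n, k ≤ l → lam l ≤ lam k)
    (hnonneg : ∀ k, 0 ≤ lam k)
    (heig : ∀ k, G *ᵥ u k = lam k • u k)
    (horth : ∀ k l, u k ⬝ᵥ u l = if k = l then 1 else 0)
    (Xstar : Matrix (Fin n) (Fin m) ℝ)
    (hXstar : ∀ i : Fin n, ∀ k : Fin m,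
      Xstar i k = Real.sqrt (lam (Fin.castLE hmn k)) * u (Fin.castLE hmn k) i) :
    (∀ X : Matrix (Fin n) (Fin m) ℝ,
        frobNorm (G - Xstar * Xstarᵀ) ≤ frobNorm (G - X * Xᵀ)) ∧
      frobNorm (G - Xstar * Xstarᵀ) ^ 2 =
        ∑ k ∈ Finset.univ.filter (fun k : Fin n => m ≤ (k : ℕ)), (lam k) ^ 2 :=
  classical_mds_optimal_general n m hm hmn G lam u hdecr hnonneg heig horth Xstar hXstar
end
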